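/- arXiv:1811.11170 — 2 statements merged into one kernel-verified Lean document; each statement's English description precedes it below -/
import Mathlib

section
/- Let (𝐓,γ) be a quasistatic dynamical system satisfying conditions (I) and (II). Then there is a constant C > 0 such that for all bounded functions F of the form F = f_a · (f_b ∘ T_k ∘ ⋯ ∘ T_1)^q with T_i ∈ 𝐓', a,b ∈ {1,…,d}, q ∈ {0,1}: (f1) |μ(f̄_α^{n,k} f̄_β^{n,l})| ≤ C|k−l|^{−φ} whenever 0 ≤ l,k ≤ n and |k−l| ≥ n₁, and |μ̂_s(f̂_{α,s} · f̂_{β,s} ∘ γ_s^k)| ≤ C k^{−φ} for all s ∈ [0,1] and k ≥ n₁; (f2) |μ̂_r(F) − μ̂_s(F)| ≤ C|r−s|^{θ₂} for all r,s ∈ [0,1], where θ₂ = φψ/(1+φ); (f3) with θ₃ = φψ/(φ+ψ+1) and η₃ = ψ/(φ+ψ+1) < 1/3, there is c₀ > 0 such that for all s ∈ [0,1] with c₀ n^{η₃−1} < s ≤ 1, |μ_{n,⌊ns⌋}(F) − μ̂_s(F)| ≤ C n^{−θ₃}. -/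
open MeasureTheory Filter Set ProbabilityTheory
open scoped Classical

noncomputable section

variable {X : Type*}

/-- `compSeq S k = S k ∘ ⋯ ∘ S 1` (`= id` for `k = 0`): a `k`-fold composition `𝒯_k`. -/
def compSeq (S : ℕ → X → X) : ℕ → X → X
  | 0 => id
  | k+1 => S (k+1) ∘ compSeq S k

/-- `rowComp T n m k = T n (m+k) ∘ ⋯ ∘ T n (m+1)` (`= id` for `k = 0`). -/
def rowComp (T : ℕ → ℕ → X → X) (n m : ℕ) : ℕ → X → X
  | 0 => id
  | k+1 => T n (m+k+1) ∘ rowComp T n m k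

/-- `gammaSeq γ r k = γ_{r k} ∘ ⋯ ∘ γ_{r 1}` (`= id` for `k = 0`). -/
def gammaSeq (γ : ℝ → X → X) (r : ℕ → ℝ) : ℕ → X → X
  | 0 => id
  | k+1 => γ (r (k+1)) ∘ gammaSeq γ r k

/-- `gammaRow γ n m k = γ_{(m+k)/n} ∘ ⋯ ∘ γ_{(m+1)/n}` (`= id` for `k = 0`). -/
def gammaRow (γ : ℝ → X → X) (n m : ℕ) : ℕ → X → X
  | 0 => id
  | k+1 => γ (((m:ℝ) + k + 1) / (n:ℝ)) ∘ gammaRow γ n m k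

/-- The family `𝐓' = 𝐓 ∪ {γ_t : t ∈ [0,1]}`. -/
def Tprime (T : ℕ → ℕ → X → X) (γ : ℝ → X → X) : Set (X → X) :=
  {S | (∃ n k : ℕ, 1 ≤ n ∧ k ≤ n ∧ S = T n k) ∨ ∃ t ∈ Set.Icc (0:ℝ) 1, S = γ t}

/-- Functions of the form `F = f_a · (f_b ∘ T_k ∘ ⋯ ∘ T_1)^q`, `T_i ∈ 𝐓'`,
`a, b ∈ {1,…,d}`, `q ∈ {0,1}`. -/
def IsFform {d : ℕ} (f : X → Fin d → ℝ) (T' : Set (X → X)) (F : X → ℝ) : Prop :=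
  ∃ (a b : Fin d) (q k : ℕ) (S : ℕ → X → X), q ≤ 1 ∧ (∀ i, 1 ≤ i → i ≤ k → S i ∈ T') ∧
    F = fun x => f x a * (f (compSeq S k x) b) ^ q

/-- The family `𝒞` of measures: the smallest family containing `μ` and all `μ̂_t`, `t ∈ [0,1]`,
and closed under pushforward by maps in `𝐓'`. -/
inductive MemC [MeasurableSpace X] (μ : Measure X) (μhat : ℝ → Measure X)
    (T' : Set (X → X)) : Measure X → Prop
  | base : MemC μ μhat T' μ
  | hat (t : ℝ) (ht : t ∈ Set.Icc (0:ℝ) 1) : MemC μ μhat T' (μhat t)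
  | push (ν : Measure X) (S : X → X) (hS : S ∈ T') (hν : MemC μ μhat T' ν) :
      MemC μ μhat T' (ν.map S)

/-- Condition (I): polynomial memory loss / decay of correlations, uniformly over the
family `𝒞` and over compositions of maps from `𝐓'`. -/
def CondI {d : ℕ} [MeasurableSpace X] (T : ℕ → ℕ → X → X) (γ : ℝ → X → X)
    (μ : Measure X) (μhat : ℝ → Measure X) (f : X → Fin d → ℝ)
    (C φ : ℝ) (n₁ : ℕ) : Prop :=
  ∀ F : X → ℝ, IsFform f (Tprime T γ) F →
    ∀ ν₁ ν₂ : Measure X, MemC μ μhat (Tprime T γ) ν₁ → MemC μ μhat (Tprime T γ) ν₂ →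
      ∀ S : ℕ → X → X, (∀ i, 1 ≤ i → S i ∈ Tprime T γ) →
        ∀ n m : ℕ, n + n₁ ≤ m → ∀ (α : Fin d) (p : ℕ), p ≤ 1 →
          |(∫ x, (f (compSeq S n x) α) ^ p * F (compSeq S m x) ∂ν₁) -
              (∫ x, (f (compSeq S n x) α) ^ p ∂ν₁) * ∫ x, F (compSeq S m x) ∂ν₂| ≤
            C * ((m : ℝ) - (n : ℝ)) ^ (-φ)

/-- Condition (II): perturbation estimates with exponent `ψ`. -/
def CondII {d : ℕ} [MeasurableSpace X] (T : ℕ → ℕ → X → X) (γ : ℝ → X → X)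
    (μ : Measure X) (μhat : ℝ → Measure X) (f : X → Fin d → ℝ) (C ψ : ℝ) : Prop :=
  (∀ F : X → ℝ, IsFform f (Tprime T γ) F →
    ∀ ν : Measure X, MemC μ μhat (Tprime T γ) ν →
      ∀ k m n : ℕ, k + m ≤ n → ∀ (α : Fin d) (p : ℕ), p ≤ 1 →
        |∫ x, (f x α) ^ p * (F (rowComp T n m k x) - F (gammaRow γ n m k x)) ∂ν| ≤
          C * (k : ℝ) * (n : ℝ) ^ (-ψ)) ∧
  (∀ F : X → ℝ, IsFform f (Tprime T γ) F →
    ∀ s ∈ Set.Icc (0:ℝ) 1, ∀ (k : ℕ) (r : ℕ → ℝ),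
      (∀ l, 1 ≤ l → l ≤ k → r l ∈ Set.Icc (0:ℝ) 1) →
      ∀ (α : Fin d) (p : ℕ), p ≤ 1 → ∀ M : ℝ, 0 ≤ M → (∀ l, 1 ≤ l → l ≤ k → |s - r l| ≤ M) →
        |∫ x, (f x α) ^ p * (F ((γ s)^[k] x) - F (gammaSeq γ r k x)) ∂(μhat s)| ≤
          C * (k : ℝ) * M ^ ψ)

/-- The fluctuation process `ξ_n(x,t) = √n ∫_0^t f̄^{n,⌊nr⌋}(x) dr`. -/
def xiQ {d : ℕ} [MeasurableSpace X] (T : ℕ → ℕ → X → X) (μ : Measure X)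
    (f : X → Fin d → ℝ) (n : ℕ) (t : ℝ) (x : X) : Fin d → ℝ :=
  fun α => Real.sqrt n * ∫ r in (0:ℝ)..t,
    (f (rowComp T n 0 ⌊(n:ℝ) * r⌋₊ x) α - ∫ y, f (rowComp T n 0 ⌊(n:ℝ) * r⌋₊ y) α ∂μ)

/-- The covariance matrix `Σ_{n,t} = μ[ξ_n(t) ⊗ ξ_n(t)]`. -/
def SigNt {d : ℕ} [MeasurableSpace X] (T : ℕ → ℕ → X → X) (μ : Measure X)
    (f : X → Fin d → ℝ) (n : ℕ) (t : ℝ) : Matrix (Fin d) (Fin d) ℝ :=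
  Matrix.of fun α β => ∫ x, xiQ T μ f n t x α * xiQ T μ f n t x β ∂μ

/-- The centered observable `f̂_{α,t} = f_α − μ̂_t(f_α)`. -/
def fhatQ {d : ℕ} [MeasurableSpace X] (μhat : ℝ → Measure X) (f : X → Fin d → ℝ)
    (α : Fin d) (t : ℝ) (x : X) : ℝ :=
  f x α - ∫ y, f y α ∂(μhat t)

/-- `Σ̂_t(f)`, defined as the limit (if it exists) of the covariance matrices of the scaled
Birkhoff sums `m^{-1/2} Σ_{k<m} f̂_t ∘ γ_t^k` with respect to `μ̂_t`. -/
def SigHat {d : ℕ} [MeasurableSpace X] (γ : ℝ → X → X) (μhat : ℝ → Measure X)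
    (f : X → Fin d → ℝ) (t : ℝ) : Matrix (Fin d) (Fin d) ℝ :=
  Matrix.of fun α β => limUnder atTop (fun m : ℕ =>
    ∫ x, ((Real.sqrt m)⁻¹ * ∑ k ∈ Finset.range m, fhatQ μhat f α t ((γ t)^[k] x)) *
         ((Real.sqrt m)⁻¹ * ∑ k ∈ Finset.range m, fhatQ μhat f β t ((γ t)^[k] x)) ∂(μhat t))

/-- `Σ_t = ∫_0^t Σ̂_s(f) ds`. -/
def SigT {d : ℕ} [MeasurableSpace X] (γ : ℝ → X → X) (μhat : ℝ → Measure X)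
    (f : X → Fin d → ℝ) (t : ℝ) : Matrix (Fin d) (Fin d) ℝ :=
  Matrix.of fun α β => ∫ s in (0:ℝ)..t, SigHat γ μhat f s α β

/-- The standard Gaussian on `ℝ^d`. -/
def stdGaussianPi (d : ℕ) : Measure (Fin d → ℝ) :=
  Measure.pi fun _ => gaussianReal 0 1

/-- The positive semidefinite square root (removed from Mathlib; old definition restored). -/
def Matrix.PosSemidef.sqrt {n : Type*} [Fintype n] [DecidableEq n]
    {A : Matrix n n ℝ} (hA : A.PosSemidef) : Matrix n n ℝ :=
  hA.1.eigenvectorUnitary * Matrix.diagonal ((fun x => Real.sqrt x) ∘ hA.1.eigenvalues) *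
    (star hA.1.eigenvectorUnitary : Matrix n n ℝ)

/-- The centered `d`-dimensional normal distribution `N(0, S)`
(junk value `0` if `S` is not positive semidefinite). -/
def gaussianOfMatrix {d : ℕ} (S : Matrix (Fin d) (Fin d) ℝ) : Measure (Fin d → ℝ) :=
  if h : S.PosSemidef then (stdGaussianPi d).map h.sqrt.mulVec else 0

/-- `Φ_S(h)`: the expectation of `h` with respect to `N(0, S)`. -/
def PhiGauss {d : ℕ} (S : Matrix (Fin d) (Fin d) ℝ) (h : (Fin d → ℝ) → ℝ) : ℝ :=
  ∫ z, h z ∂(gaussianOfMatrix S)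

end

/-!
Everything is compared with long orbits of a single frozen map. Condition (I) applied to the
coordinates of `f` is (f1), once the covariance is expanded. For (f2), invariance gives
`μ̂_r(F) = μ̂_r(F ∘ γ_r^k)`; condition (II) replaces `γ_r^k` by `γ_s^k` at cost `k |r - s|^ψ`, and
condition (I) replaces `μ̂_r` by `μ̂_s` at cost `k^(-φ)`, so `k ≈ |r - s|^(-ψ/(1+φ))` balances
the two. For (f3), the last `m ≈ n^η₃` maps of the row are replaced by the frozen maps `γ_{j/n}`
(cost `m n^(-ψ)`), the measure reached after the first `⌊ns⌋ - m` steps by `μ̂_s` (cost `m^(-φ)`),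
and the maps `γ_{j/n}` by `γ_s` (cost `m (m/n)^ψ`); all three are `O(n^(-θ₃))`.
-/

section Compositions

variable {X : Type*}

lemma compSeq_congr {S S' : ℕ → X → X} {k : ℕ} (h : ∀ i, 1 ≤ i → i ≤ k → S i = S' i) :
    compSeq S k = compSeq S' k := by
  induction k with
  | zero => rfl
  | succ k ih =>
    simp only [compSeq, h (k + 1) (by omega) le_rfl, ih fun i h1 h2 => h i h1 (by omega)]

lemma compSeq_const (g : X → X) (k : ℕ) : compSeq (fun _ => g) k = g^[k] := by
  induction k with
  | zero => rfl
  | succ k ih => simp only [compSeq, ih, Function.iterate_succ']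

lemma rowComp_eq_compSeq (T : ℕ → ℕ → X → X) (n m k : ℕ) :
    rowComp T n m k = compSeq (fun i => T n (m + i)) k := by
  induction k with
  | zero => rfl
  | succ k ih => simp only [rowComp, compSeq, ih, Nat.add_assoc]

lemma gammaSeq_eq_compSeq (γ : ℝ → X → X) (r : ℕ → ℝ) (k : ℕ) :
    gammaSeq γ r k = compSeq (fun i => γ (r i)) k := by
  induction k with
  | zero => rfl
  | succ k ih => simp only [gammaSeq, compSeq, ih]

lemma gammaRow_eq_gammaSeq (γ : ℝ → X → X) (n m k : ℕ) :
    gammaRow γ n m k = gammaSeq γ (fun i => ((m + i : ℕ) : ℝ) / n) k := by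
  induction k with
  | zero => rfl
  | succ k ih =>
    simp only [gammaRow, gammaSeq, ih]
    push_cast
    ring_nf

lemma rowComp_zero_add (T : ℕ → ℕ → X → X) (n a b : ℕ) :
    rowComp T n 0 (a + b) = rowComp T n a b ∘ rowComp T n 0 a := by
  induction b with
  | zero => rfl
  | succ b ih =>
    rw [← Nat.add_assoc, rowComp, ih, rowComp, Nat.zero_add, Function.comp_assoc]

lemma measurable_compSeq [MeasurableSpace X] {S : ℕ → X → X} {k : ℕ}
    (h : ∀ i, 1 ≤ i → i ≤ k → Measurable (S i)) : Measurable (compSeq S k) := by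
  induction k with
  | zero => exact measurable_id
  | succ k ih => exact (h (k + 1) (by omega) le_rfl).comp (ih fun i h1 h2 => h i h1 (by omega))

lemma gammaRow_eq_compSeq_min {X : Type*} (γ : ℝ → X → X) (n a m : ℕ) :
    gammaRow γ n a m = compSeq (fun i => γ (((a + min i m : ℕ) : ℝ) / n)) m := by
  rw [gammaRow_eq_gammaSeq, gammaSeq_eq_compSeq]
  exact compSeq_congr fun i _ hi => by rw [min_eq_left hi]

end Compositions

lemma MeasureTheory.MeasurePreserving.integral_comp_of_measurable {X : Type*} [MeasurableSpace X]
    {μ : Measure X} {g : X → X} (hg : MeasurePreserving g μ μ) {F : X → ℝ} (hF : Measurable F) :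
    ∫ x, F (g x) ∂μ = ∫ x, F x ∂μ := by
  rw [← integral_map hg.measurable.aemeasurable hF.aestronglyMeasurable, hg.map_eq]

lemma exists_nat_between_of_one_le (n₁ : ℕ) {t : ℝ} (ht : 1 ≤ t) :
    ∃ k : ℕ, n₁ ≤ k ∧ t ≤ k ∧ (k : ℝ) ≤ (n₁ + 2) * t := by
  refine ⟨n₁ + ⌈t⌉₊, by omega, ?_, ?_⟩
  · exact (Nat.le_ceil t).trans (by push_cast; linarith [(n₁.cast_nonneg : (0 : ℝ) ≤ n₁)])
  · have := Nat.ceil_lt_add_one (zero_le_one.trans ht)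
    push_cast
    nlinarith [(n₁.cast_nonneg : (0 : ℝ) ≤ n₁)]

lemma mul_rpow_add_rpow_neg_le {φ ψ ε k c : ℝ} (hφ : 0 ≤ φ) (hε : 0 < ε)
    (hk : ε ^ (-(ψ / (1 + φ))) ≤ k) (hk' : k ≤ c * ε ^ (-(ψ / (1 + φ)))) :
    k * ε ^ ψ + k ^ (-φ) ≤ (c + 1) * ε ^ (φ * ψ / (1 + φ)) := by
  set t := ε ^ (-(ψ / (1 + φ)))
  have ht : 0 < t := Real.rpow_pos_of_pos hε _
  have htε : t * ε ^ ψ = ε ^ (φ * ψ / (1 + φ)) := by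
    rw [← Real.rpow_add hε]
    congr 1
    field_simp
    ring
  have htφ : t ^ (-φ) = ε ^ (φ * ψ / (1 + φ)) := by
    rw [← Real.rpow_mul hε.le]
    congr 1
    field_simp
  have h₁ : k * ε ^ ψ ≤ c * ε ^ (φ * ψ / (1 + φ)) := by
    rw [← htε, ← mul_assoc]
    exact mul_le_mul_of_nonneg_right hk' (by positivity)
  have h₂ : k ^ (-φ) ≤ ε ^ (φ * ψ / (1 + φ)) :=
    htφ ▸ Real.rpow_le_rpow_of_nonpos ht hk (by linarith)
  linarith

lemma mul_rpow_add_rpow_neg_add_mul_div_rpow_le {φ ψ n m c : ℝ} (hφ : 0 ≤ φ) (hψ : 0 ≤ ψ)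
    (hψ1 : ψ ≤ 1) (hn : 1 ≤ n) (hc : 1 ≤ c) (hm : n ^ (ψ / (φ + ψ + 1)) ≤ m)
    (hm' : m ≤ c * n ^ (ψ / (φ + ψ + 1))) :
    m * n ^ (-ψ) + m ^ (-φ) + m * (m / n) ^ ψ ≤
      (c + 1) ^ 2 * n ^ (-(φ * ψ / (φ + ψ + 1))) := by
  set η := ψ / (φ + ψ + 1) with hη
  set θ := φ * ψ / (φ + ψ + 1) with hθ
  have hn0 : 0 < n := by linarith
  have hden : 0 < φ + ψ + 1 := by linarith
  have hN : 1 ≤ n ^ η := Real.one_le_rpow hn (by positivity)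
  have hm0 : 0 ≤ m := by linarith
  have h₁ : m * n ^ (-ψ) ≤ c * n ^ (-θ) := calc
    m * n ^ (-ψ) ≤ c * n ^ η * n ^ (-ψ) := mul_le_mul_of_nonneg_right hm' (by positivity)
    _ = c * n ^ (η + -ψ) := by rw [mul_assoc, ← Real.rpow_add hn0]
    _ ≤ c * n ^ (-θ) := by
      gcongr
      · rw [hη, hθ, ← sub_eq_add_neg, div_sub' hden.ne', neg_div',
          div_le_div_iff_of_pos_right hden]
        nlinarith
  have h₂ : m ^ (-φ) ≤ n ^ (-θ) := calc
    m ^ (-φ) ≤ (n ^ η) ^ (-φ) := Real.rpow_le_rpow_of_nonpos (by positivity) hm (by linarith)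
    _ = n ^ (-θ) := by rw [← Real.rpow_mul hn0.le, hη, hθ]; ring_nf
  have h₃ : m * (m / n) ^ ψ ≤ c ^ 2 * n ^ (-θ) := calc
    m * (m / n) ^ ψ ≤ c * n ^ η * (c * n ^ η / n) ^ ψ := by gcongr
    _ = (c * c ^ ψ) * n ^ (η + η * ψ + -ψ) := by
      rw [Real.div_rpow (by positivity) hn0.le, Real.mul_rpow (by positivity) (by positivity),
        ← Real.rpow_mul hn0.le, Real.rpow_add hn0, Real.rpow_add hn0, Real.rpow_neg hn0.le]
      ring
    _ = (c * c ^ ψ) * n ^ (-θ) := by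
      congr 2
      rw [hη, hθ]
      field_simp
      ring
    _ ≤ c ^ 2 * n ^ (-θ) := by
      gcongr
      calc c * c ^ ψ ≤ c * c ^ (1 : ℝ) := by gcongr
        _ = c ^ 2 := by rw [Real.rpow_one, sq]
  nlinarith [Real.rpow_nonneg hn0.le (-θ)]

section Fform

variable {X : Type*} {d : ℕ} {f : X → Fin d → ℝ} {T' : Set (X → X)} {F : X → ℝ} {B : ℝ}

lemma isFform_apply (β : Fin d) : IsFform f T' fun x => f x β :=
  ⟨β, β, 0, 0, fun _ => id, zero_le_one, fun _ _ _ => by omega, by simp⟩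

lemma IsFform.abs_le (hF : IsFform f T' F) (hfB : ∀ x α, |f x α| ≤ B) (x : X) :
    |F x| ≤ B * (B + 1) := by
  obtain ⟨a, b, q, k, S, hq, -, rfl⟩ := hF
  have hB : 0 ≤ B := (abs_nonneg _).trans (hfB x a)
  have hpow : |f (compSeq S k x) b| ^ q ≤ B + 1 := by
    interval_cases q
    · simpa using hB
    · simpa using (hfB _ b).trans (le_add_of_nonneg_right zero_le_one)
  rw [abs_mul, abs_pow]
  exact mul_le_mul (hfB x a) hpow (by positivity) hB

variable [MeasurableSpace X]

lemma IsFform.measurable (hF : IsFform f T' F) (hf : Measurable f)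
    (hT' : ∀ S ∈ T', Measurable S) : Measurable F := by
  obtain ⟨a, b, q, k, S, -, hS, rfl⟩ := hF
  have hSk : Measurable (compSeq S k) := measurable_compSeq fun i h1 h2 => hT' _ (hS i h1 h2)
  exact ((measurable_pi_apply a).comp hf).mul
    ((((measurable_pi_apply b).comp hf).comp hSk).pow_const q)

lemma IsFform.integrable_comp (hF : IsFform f T' F) (hf : Measurable f)
    (hT' : ∀ S ∈ T', Measurable S) (hfB : ∀ x α, |f x α| ≤ B) {g : X → X} (hg : Measurable g)
    (ν : Measure X) [IsFiniteMeasure ν] : Integrable (fun x => F (g x)) ν :=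
  .of_bound ((hF.measurable hf hT').comp hg).aestronglyMeasurable _
    (ae_of_all _ fun x => hF.abs_le hfB (g x))

lemma memLp_comp_apply (hf : Measurable f) (hfB : ∀ x α, |f x α| ≤ B) {g : X → X}
    (hg : Measurable g) (α : Fin d) (p : ENNReal) (ν : Measure X) [IsFiniteMeasure ν] :
    MemLp (fun x => f (g x) α) p ν :=
  .of_bound (((measurable_pi_apply α).comp hf).comp hg).aestronglyMeasurable _
    (ae_of_all _ fun x => hfB (g x) α)

end Fform

section QDS

variable {X : Type*} [MeasurableSpace X] {d : ℕ} {T : ℕ → ℕ → X → X} {γ : ℝ → X → X}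
  {μ : Measure X} {μhat : ℝ → Measure X} {f : X → Fin d → ℝ} {C φ ψ : ℝ} {n₁ : ℕ} {B : ℝ}
  {F : X → ℝ}

lemma measurable_of_mem_Tprime (hT : ∀ n k, Measurable (T n k)) (hγ : ∀ t, Measurable (γ t)) :
    ∀ S ∈ Tprime T γ, Measurable S := by
  rintro S (⟨n, k, -, -, rfl⟩ | ⟨t, -, rfl⟩)
  exacts [hT n k, hγ t]

lemma measurable_rowComp (hT : ∀ n k, Measurable (T n k)) (n m k : ℕ) :
    Measurable (rowComp T n m k) := by
  rw [rowComp_eq_compSeq]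
  exact measurable_compSeq fun i _ _ => hT n _

lemma measurable_gammaSeq (hγ : ∀ t, Measurable (γ t)) (r : ℕ → ℝ) (k : ℕ) :
    Measurable (gammaSeq γ r k) := by
  rw [gammaSeq_eq_compSeq]
  exact measurable_compSeq fun i _ _ => hγ _

lemma measurable_gammaRow (hγ : ∀ t, Measurable (γ t)) (n m k : ℕ) :
    Measurable (gammaRow γ n m k) := by
  rw [gammaRow_eq_gammaSeq]
  exact measurable_gammaSeq hγ _ k

lemma MemC.isProbabilityMeasure {T' : Set (X → X)} {ν : Measure X} (hν : MemC μ μhat T' ν)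
    [IsProbabilityMeasure μ] [∀ t, IsProbabilityMeasure (μhat t)]
    (hT' : ∀ S ∈ T', Measurable S) : IsProbabilityMeasure ν := by
  induction hν with
  | base => infer_instance
  | hat t _ => infer_instance
  | push ν S hS _ ih => exact Measure.isProbabilityMeasure_map (hT' S hS).aemeasurable

lemma memC_map_rowComp (hT : ∀ n k, Measurable (T n k)) {n j : ℕ} (hn : 1 ≤ n) (hj : j ≤ n) :
    MemC μ μhat (Tprime T γ) (μ.map (rowComp T n 0 j)) := by
  induction j with
  | zero => simpa [rowComp] using MemC.base
  | succ j ih =>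
    rw [rowComp, Nat.zero_add, ← Measure.map_map (hT n (j + 1)) (measurable_rowComp hT n 0 j)]
    exact .push _ _ (Or.inl ⟨n, j + 1, hn, hj, rfl⟩) (ih (by omega))

theorem CondI.abs_covariance_le (hI : CondI T γ μ μhat f C φ n₁) {ν : Measure X}
    [IsProbabilityMeasure ν] (hν : MemC μ μhat (Tprime T γ) ν) (hf : Measurable f)
    (hfB : ∀ x α, |f x α| ≤ B) {S : ℕ → X → X} (hS : ∀ i, 1 ≤ i → S i ∈ Tprime T γ)
    (hSm : ∀ i, Measurable (S i)) {n m : ℕ} (hnm : n + n₁ ≤ m) (α β : Fin d) :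
    |cov[fun x => f (compSeq S n x) α, fun x => f (compSeq S m x) β; ν]| ≤
      C * ((m : ℝ) - n) ^ (-φ) := by
  rw [covariance_eq_sub (memLp_comp_apply hf hfB (measurable_compSeq fun i _ _ => hSm i) α 2 ν)
    (memLp_comp_apply hf hfB (measurable_compSeq fun i _ _ => hSm i) β 2 ν)]
  simpa using hI _ (isFform_apply β) ν ν hν hν S hS n m hnm α 1 le_rfl

theorem CondI.abs_integral_sub_le (hI : CondI T γ μ μhat f C φ n₁)
    (hF : IsFform f (Tprime T γ) F) {ν₁ ν₂ : Measure X} [IsProbabilityMeasure ν₁]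
    (hν₁ : MemC μ μhat (Tprime T γ) ν₁) (hν₂ : MemC μ μhat (Tprime T γ) ν₂)
    {S : ℕ → X → X} (hS : ∀ i, 1 ≤ i → S i ∈ Tprime T γ) {m : ℕ} (hm : n₁ ≤ m) :
    |∫ x, F (compSeq S m x) ∂ν₁ - ∫ x, F (compSeq S m x) ∂ν₂| ≤ C * (m : ℝ) ^ (-φ) := by
  obtain ⟨a, -⟩ := id hF
  simpa using hI F hF ν₁ ν₂ hν₁ hν₂ S hS 0 m (by omega) a 0 zero_le_one

theorem CondII.abs_integral_rowComp_sub_le (hII : CondII T γ μ μhat f C ψ)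
    (hF : IsFform f (Tprime T γ) F) {ν : Measure X} (hν : MemC μ μhat (Tprime T γ) ν)
    {k m n : ℕ} (hkmn : k + m ≤ n) (h₁ : Integrable (fun x => F (rowComp T n m k x)) ν)
    (h₂ : Integrable (fun x => F (gammaRow γ n m k x)) ν) :
    |∫ x, F (rowComp T n m k x) ∂ν - ∫ x, F (gammaRow γ n m k x) ∂ν| ≤
      C * k * (n : ℝ) ^ (-ψ) := by
  obtain ⟨a, -⟩ := id hF
  rw [← integral_sub h₁ h₂]
  simpa using hII.1 F hF ν hν k m n hkmn a 0 zero_le_one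

theorem CondII.abs_integral_iterate_sub_le (hII : CondII T γ μ μhat f C ψ)
    (hF : IsFform f (Tprime T γ) F) {s : ℝ} (hs : s ∈ Icc (0 : ℝ) 1) {k : ℕ} {r : ℕ → ℝ}
    (hr : ∀ l, 1 ≤ l → l ≤ k → r l ∈ Icc (0 : ℝ) 1) {M : ℝ} (hM : 0 ≤ M)
    (hrM : ∀ l, 1 ≤ l → l ≤ k → |s - r l| ≤ M)
    (h₁ : Integrable (fun x => F ((γ s)^[k] x)) (μhat s))
    (h₂ : Integrable (fun x => F (gammaSeq γ r k x)) (μhat s)) :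
    |∫ x, F ((γ s)^[k] x) ∂(μhat s) - ∫ x, F (gammaSeq γ r k x) ∂(μhat s)| ≤
      C * k * M ^ ψ := by
  obtain ⟨a, -⟩ := id hF
  rw [← integral_sub h₁ h₂]
  simpa using hII.2 F hF s hs k r hr a 0 zero_le_one M hM hrM

theorem CondI.abs_covariance_rowComp_le_of_add_le (hI : CondI T γ μ μhat f C φ n₁)
    [IsProbabilityMeasure μ] (hT : ∀ n k, Measurable (T n k)) (hf : Measurable f)
    (hfB : ∀ x α, |f x α| ≤ B) {n k l : ℕ} (hn : 1 ≤ n) (hl : l ≤ n)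
    (hkl : k + n₁ ≤ l) (α β : Fin d) :
    |cov[fun x => f (rowComp T n 0 k x) α, fun x => f (rowComp T n 0 l x) β; μ]| ≤
      C * ((l : ℝ) - k) ^ (-φ) := by
  have hrow : ∀ j ≤ n, rowComp T n 0 j = compSeq (fun i => T n (min i n)) j := fun j hj => by
    rw [rowComp_eq_compSeq]
    exact compSeq_congr fun i _ hi => by rw [Nat.zero_add, min_eq_left (hi.trans hj)]
  rw [hrow k (by omega), hrow l hl]
  exact hI.abs_covariance_le .base hf hfB
    (fun i _ => Or.inl ⟨n, min i n, hn, min_le_right _ _, rfl⟩) (fun _ => hT _ _) hkl α β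

theorem CondI.abs_covariance_rowComp_le (hI : CondI T γ μ μhat f C φ n₁)
    [IsProbabilityMeasure μ] (hT : ∀ n k, Measurable (T n k)) (hf : Measurable f)
    (hfB : ∀ x α, |f x α| ≤ B) (hn₁ : 1 ≤ n₁) {n k l : ℕ} (hk : k ≤ n)
    (hl : l ≤ n) (hkl : (n₁ : ℤ) ≤ |(k : ℤ) - l|) (α β : Fin d) :
    |cov[fun x => f (rowComp T n 0 k x) α, fun x => f (rowComp T n 0 l x) β; μ]| ≤
      C * |(k : ℝ) - l| ^ (-φ) := by
  wlog hlk : k ≤ l generalizing k l α β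
  · rw [covariance_comm, abs_sub_comm]
    exact this hl hk (by rwa [abs_sub_comm]) β α (by omega)
  have hkl' : k + n₁ ≤ l := by
    rw [abs_of_nonpos (by omega)] at hkl
    omega
  rw [abs_sub_comm (k : ℝ), abs_of_nonneg (a := (l : ℝ) - k) (by simpa using hlk)]
  exact hI.abs_covariance_rowComp_le_of_add_le hT hf hfB (by omega) hl hkl' α β

theorem CondI.abs_covariance_fhatQ_iterate_le (hI : CondI T γ μ μhat f C φ n₁)
    {s : ℝ} (hs : s ∈ Icc (0 : ℝ) 1) [IsProbabilityMeasure (μhat s)]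
    (hpres : MeasurePreserving (γ s) (μhat s) (μhat s)) (hf : Measurable f)
    (hfB : ∀ x α, |f x α| ≤ B) {k : ℕ} (hk : n₁ ≤ k) (α β : Fin d) :
    |∫ x, fhatQ μhat f α s x * fhatQ μhat f β s ((γ s)^[k] x) ∂(μhat s)| ≤
      C * (k : ℝ) ^ (-φ) := by
  have hmean : ∫ y, f ((γ s)^[k] y) β ∂(μhat s) = ∫ y, f y β ∂(μhat s) :=
    (hpres.iterate k).integral_comp_of_measurable ((measurable_pi_apply β).comp hf)
  have hcov := hI.abs_covariance_le (.hat s hs) hf hfB (S := fun _ => γ s)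
    (fun _ _ => Or.inr ⟨s, hs, rfl⟩) (fun _ => hpres.measurable) (n := 0) (m := k) (by omega) α β
  simpa [compSeq_const, covariance, fhatQ, hmean] using hcov

theorem abs_integral_muhat_sub_le (hI : CondI T γ μ μhat f C φ n₁)
    (hII : CondII T γ μ μhat f C ψ) [∀ t, IsProbabilityMeasure (μhat t)]
    (hT : ∀ n k, Measurable (T n k)) (hγ : ∀ t, Measurable (γ t))
    (hinv : ∀ t ∈ Icc (0 : ℝ) 1, (μhat t).map (γ t) = μhat t) (hf : Measurable f)
    (hfB : ∀ x α, |f x α| ≤ B) (hC : 0 ≤ C) (hφ : 0 ≤ φ) (hψ : 0 ≤ ψ)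
    (hF : IsFform f (Tprime T γ) F) {r s : ℝ} (hr : r ∈ Icc (0 : ℝ) 1) (hs : s ∈ Icc (0 : ℝ) 1) :
    |∫ x, F x ∂(μhat r) - ∫ x, F x ∂(μhat s)| ≤
      C * (n₁ + 3) * |r - s| ^ (φ * ψ / (1 + φ)) := by
  rcases eq_or_ne r s with rfl | hrs
  · simp only [sub_self, abs_zero]
    positivity
  set ε := |r - s|
  have hε : 0 < ε := abs_pos.2 (sub_ne_zero.2 hrs)
  have hε1 : ε ≤ 1 := abs_sub_le_iff.2 ⟨by linarith [hr.2, hs.1], by linarith [hr.1, hs.2]⟩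
  obtain ⟨k, hk, hkt, hkt'⟩ := exists_nat_between_of_one_le n₁
    (Real.one_le_rpow_of_pos_of_le_one_of_nonpos hε hε1
      (neg_nonpos.2 (div_nonneg hψ (by linarith : (0 : ℝ) ≤ 1 + φ))))
  have hFm := hF.measurable hf (measurable_of_mem_Tprime hT hγ)
  have hFint {g : X → X} (hg : Measurable g) (ν : Measure X) [IsFiniteMeasure ν] :=
    hF.integrable_comp hf (measurable_of_mem_Tprime hT hγ) hfB hg ν
  have hiter : ∀ t ∈ Icc (0 : ℝ) 1, ∫ x, F ((γ t)^[k] x) ∂(μhat t) = ∫ x, F x ∂(μhat t) :=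
    fun t ht => (MeasurePreserving.iterate ⟨hγ t, hinv t ht⟩ k).integral_comp_of_measurable hFm
  have hperturb : |∫ x, F ((γ r)^[k] x) ∂(μhat r) - ∫ x, F ((γ s)^[k] x) ∂(μhat r)| ≤
      C * k * ε ^ ψ := by
    have h := hII.abs_integral_iterate_sub_le hF hr (r := fun _ => s) (fun _ _ _ => hs) hε.le
      (fun _ _ _ => le_rfl) (hFint ((hγ r).iterate k) _)
      (hFint (measurable_gammaSeq hγ _ k) _)
    rwa [gammaSeq_eq_compSeq, compSeq_const] at h
  have hmix : |∫ x, F ((γ s)^[k] x) ∂(μhat r) - ∫ x, F ((γ s)^[k] x) ∂(μhat s)| ≤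
      C * (k : ℝ) ^ (-φ) := by
    have h := hI.abs_integral_sub_le hF (.hat r hr) (.hat s hs) (S := fun _ => γ s)
      (fun _ _ => Or.inr ⟨s, hs, rfl⟩) hk
    rwa [compSeq_const] at h
  calc |∫ x, F x ∂(μhat r) - ∫ x, F x ∂(μhat s)|
      = |(∫ x, F ((γ r)^[k] x) ∂(μhat r) - ∫ x, F ((γ s)^[k] x) ∂(μhat r)) +
          (∫ x, F ((γ s)^[k] x) ∂(μhat r) - ∫ x, F ((γ s)^[k] x) ∂(μhat s))| := by
        rw [hiter r hr, hiter s hs, sub_add_sub_cancel]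
    _ ≤ C * k * ε ^ ψ + C * (k : ℝ) ^ (-φ) := (abs_add_le _ _).trans (add_le_add hperturb hmix)
    _ = C * (k * ε ^ ψ + (k : ℝ) ^ (-φ)) := by ring
    _ ≤ C * (n₁ + 3) * ε ^ (φ * ψ / (1 + φ)) := by
      rw [mul_assoc, show (n₁ : ℝ) + 3 = n₁ + 2 + 1 by ring]
      exact mul_le_mul_of_nonneg_left (mul_rpow_add_rpow_neg_le hφ hε hkt hkt') hC

theorem abs_integral_rowComp_sub_le (hI : CondI T γ μ μhat f C φ n₁)
    (hII : CondII T γ μ μhat f C ψ) [IsProbabilityMeasure μ] [∀ t, IsProbabilityMeasure (μhat t)]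
    (hT : ∀ n k, Measurable (T n k)) (hγ : ∀ t, Measurable (γ t)) (hf : Measurable f)
    (hfB : ∀ x α, |f x α| ≤ B) (hF : IsFform f (Tprime T γ) F) {s : ℝ} (hs : s ∈ Icc (0 : ℝ) 1)
    (hpres : MeasurePreserving (γ s) (μhat s) (μhat s)) {n a m : ℕ} (hn : 1 ≤ n)
    (hs₁ : ((a + m : ℕ) : ℝ) ≤ n * s) (hs₂ : n * s < a + m + 1) (hm : n₁ ≤ m) :
    |∫ x, F (rowComp T n 0 (a + m) x) ∂μ - ∫ x, F x ∂(μhat s)| ≤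
      C * m * (n : ℝ) ^ (-ψ) + C * (m : ℝ) ^ (-φ) + C * m * ((m : ℝ) / n) ^ ψ := by
  have hn0 : (0 : ℝ) < n := by exact_mod_cast hn
  have han : a + m ≤ n := by
    have : ((a + m : ℕ) : ℝ) ≤ n := hs₁.trans (mul_le_of_le_one_right hn0.le hs.2)
    exact_mod_cast this
  have hTm := measurable_of_mem_Tprime hT hγ
  have hFint {g : X → X} (hg : Measurable g) (ν : Measure X) [IsFiniteMeasure ν] :=
    hF.integrable_comp hf hTm hfB hg ν
  set ν := μ.map (rowComp T n 0 a)
  have hν : MemC μ μhat (Tprime T γ) ν := memC_map_rowComp hT hn (by omega)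
  have : IsProbabilityMeasure ν := hν.isProbabilityMeasure hTm
  have hstart : ∫ x, F (rowComp T n 0 (a + m) x) ∂μ = ∫ x, F (rowComp T n a m x) ∂ν := by
    rw [rowComp_zero_add]
    exact (integral_map (measurable_rowComp hT n 0 a).aemeasurable
      ((hF.measurable hf hTm).comp (measurable_rowComp hT n a m)).aestronglyMeasurable).symm
  have hnode : ∀ l ≤ m, ((a + l : ℕ) : ℝ) / n ∈ Icc (0 : ℝ) 1 := fun l hl =>
    ⟨by positivity, (div_le_one hn0).2 (by exact_mod_cast (show a + l ≤ n by omega))⟩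
  have hfreeze : ∀ l, 1 ≤ l → l ≤ m → |s - ((a + l : ℕ) : ℝ) / n| ≤ m / n := fun l hl hlm => by
    have hl' : ((a + l : ℕ) : ℝ) ≤ ((a + m : ℕ) : ℝ) := by exact_mod_cast (by omega)
    have hl'' : ((a + m : ℕ) : ℝ) + 1 ≤ ((a + l : ℕ) : ℝ) + m := by exact_mod_cast (by omega)
    rw [show s - ((a + l : ℕ) : ℝ) / n = (n * s - (a + l : ℕ)) / n by field_simp, abs_div,
      abs_of_pos hn0, abs_of_nonneg (by linarith)]
    gcongr
    push_cast at hs₂ hl'' ⊢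
    linarith
  have h₁ := hII.abs_integral_rowComp_sub_le hF hν (show m + a ≤ n by omega)
    (hFint (measurable_rowComp hT n a m) ν) (hFint (measurable_gammaRow hγ n a m) ν)
  have h₂ : |∫ x, F (gammaRow γ n a m x) ∂ν - ∫ x, F (gammaRow γ n a m x) ∂(μhat s)| ≤
      C * (m : ℝ) ^ (-φ) := by
    rw [gammaRow_eq_compSeq_min]
    exact hI.abs_integral_sub_le hF hν (.hat s hs)
      (fun i _ => Or.inr ⟨_, hnode _ (min_le_right i m), rfl⟩) hm
  have h₃ : |∫ x, F ((γ s)^[m] x) ∂(μhat s) - ∫ x, F (gammaRow γ n a m x) ∂(μhat s)| ≤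
      C * m * ((m : ℝ) / n) ^ ψ := by
    rw [gammaRow_eq_gammaSeq]
    exact hII.abs_integral_iterate_sub_le hF hs (fun l _ hl => hnode l hl) (by positivity)
      hfreeze (hFint (hpres.measurable.iterate m) _) (hFint (measurable_gammaSeq hγ _ m) _)
  rw [hstart, ← (hpres.iterate m).integral_comp_of_measurable (hF.measurable hf hTm)]
  calc _ = |(∫ x, F (rowComp T n a m x) ∂ν - ∫ x, F (gammaRow γ n a m x) ∂ν) +
        (∫ x, F (gammaRow γ n a m x) ∂ν - ∫ x, F (gammaRow γ n a m x) ∂(μhat s)) -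
        (∫ x, F ((γ s)^[m] x) ∂(μhat s) - ∫ x, F (gammaRow γ n a m x) ∂(μhat s))| := by
        ring_nf
    _ ≤ _ := (abs_sub _ _).trans (add_le_add ((abs_add_le _ _).trans (add_le_add h₁ h₂)) h₃)

theorem abs_integral_rowComp_floor_sub_le (hI : CondI T γ μ μhat f C φ n₁)
    (hII : CondII T γ μ μhat f C ψ) [IsProbabilityMeasure μ] [∀ t, IsProbabilityMeasure (μhat t)]
    (hT : ∀ n k, Measurable (T n k)) (hγ : ∀ t, Measurable (γ t))
    (hinv : ∀ t ∈ Icc (0 : ℝ) 1, (μhat t).map (γ t) = μhat t) (hf : Measurable f)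
    (hfB : ∀ x α, |f x α| ≤ B) (hC : 0 ≤ C) (hφ : 0 ≤ φ) (hψ : ψ ∈ Icc (0 : ℝ) 1)
    (hF : IsFform f (Tprime T γ) F) {n : ℕ} (hn : 1 ≤ n) {s : ℝ}
    (hs : (n₁ + 3) * (n : ℝ) ^ (ψ / (φ + ψ + 1) - 1) < s) (hs1 : s ≤ 1) :
    |∫ x, F (rowComp T n 0 ⌊(n : ℝ) * s⌋₊ x) ∂μ - ∫ x, F x ∂(μhat s)| ≤
      C * (n₁ + 3) ^ 2 * (n : ℝ) ^ (-(φ * ψ / (φ + ψ + 1))) := by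
  have hn' : (1 : ℝ) ≤ n := by exact_mod_cast hn
  have hN : 1 ≤ (n : ℝ) ^ (ψ / (φ + ψ + 1)) :=
    Real.one_le_rpow hn' (div_nonneg hψ.1 (by linarith [hψ.1]))
  obtain ⟨m, hm, hmN, hmN'⟩ := exists_nat_between_of_one_le n₁ hN
  have hs0 : 0 < s := lt_of_le_of_lt (by positivity) hs
  have hmk : m ≤ ⌊(n : ℝ) * s⌋₊ := by
    refine Nat.le_floor (hmN'.trans (lt_of_lt_of_le ?_ (mul_le_mul_of_nonneg_left hs.le ?_)).le)
    · rw [mul_left_comm, Real.rpow_sub_one (by positivity), mul_div_cancel₀ _ (by positivity)]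
      nlinarith
    · positivity
  obtain ⟨a, ha⟩ := Nat.exists_eq_add_of_le' hmk
  have hfloor := ha ▸ Nat.floor_le (by positivity : 0 ≤ (n : ℝ) * s)
  have hfloor' : (n : ℝ) * s < a + m + 1 := by
    have := Nat.lt_floor_add_one ((n : ℝ) * s)
    rw [ha] at this
    exact_mod_cast this
  rw [ha]
  refine (abs_integral_rowComp_sub_le hI hII hT hγ hf hfB hF ⟨hs0.le, hs1⟩
    ⟨hγ s, hinv s ⟨hs0.le, hs1⟩⟩ hn hfloor hfloor' hm).trans ?_
  have hnum := mul_rpow_add_rpow_neg_add_mul_div_rpow_le hφ hψ.1 hψ.2 hn'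
    (by linarith [(n₁.cast_nonneg : (0 : ℝ) ≤ n₁)]) hmN hmN'
  rw [show (n₁ : ℝ) + 2 + 1 = n₁ + 3 by ring] at hnum
  calc _ = C * (m * (n : ℝ) ^ (-ψ) + (m : ℝ) ^ (-φ) + m * ((m : ℝ) / n) ^ ψ) := by ring
    _ ≤ _ := by rw [mul_assoc]; exact mul_le_mul_of_nonneg_left hnum hC

end QDS

theorem qds_conditions_f1_f2_f3_general
    {X : Type*} [MeasurableSpace X] {d : ℕ}
    (T : ℕ → ℕ → X → X) (γ : ℝ → X → X) (μ : Measure X) (μhat : ℝ → Measure X)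
    (f : X → Fin d → ℝ)
    (hμP : IsProbabilityMeasure μ) (hμhatP : ∀ t, IsProbabilityMeasure (μhat t))
    (hT : ∀ n k, Measurable (T n k)) (hγ : ∀ t, Measurable (γ t))
    (hinv : ∀ t ∈ Set.Icc (0:ℝ) 1, (μhat t).map (γ t) = μhat t)
    (hf : Measurable f) (B : ℝ) (hfB : ∀ x α, |f x α| ≤ B)
    (C₀ φ ψ : ℝ) (n₁ : ℕ) (hC₀ : 0 < C₀) (hφ : 1 < φ) (hn₁ : 1 ≤ n₁)
    (hψ : ψ ∈ Set.Ioc (0:ℝ) 1)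
    (hI : CondI T γ μ μhat f C₀ φ n₁) (hII : CondII T γ μ μhat f C₀ ψ) :
    ψ / (φ + ψ + 1) < 1/3 ∧
    ∃ C > 0, ∃ c₀ > 0,
      (∀ n k l : ℕ, k ≤ n → l ≤ n → (n₁ : ℤ) ≤ |(k : ℤ) - (l : ℤ)| → ∀ α β : Fin d,
        |∫ x, (f (rowComp T n 0 k x) α - ∫ y, f (rowComp T n 0 k y) α ∂μ) *
              (f (rowComp T n 0 l x) β - ∫ y, f (rowComp T n 0 l y) β ∂μ) ∂μ| ≤
          C * |(k : ℝ) - (l : ℝ)| ^ (-φ)) ∧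
      (∀ s ∈ Set.Icc (0:ℝ) 1, ∀ k : ℕ, n₁ ≤ k → ∀ α β : Fin d,
        |∫ x, fhatQ μhat f α s x * fhatQ μhat f β s ((γ s)^[k] x) ∂(μhat s)| ≤
          C * (k : ℝ) ^ (-φ)) ∧
      (∀ F : X → ℝ, IsFform f (Tprime T γ) F →
        ∀ r ∈ Set.Icc (0:ℝ) 1, ∀ s ∈ Set.Icc (0:ℝ) 1,
          |(∫ x, F x ∂(μhat r)) - ∫ x, F x ∂(μhat s)| ≤
            C * |r - s| ^ (φ * ψ / (1 + φ))) ∧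
      (∀ F : X → ℝ, IsFform f (Tprime T γ) F →
        ∀ n : ℕ, 1 ≤ n → ∀ s : ℝ, c₀ * (n : ℝ) ^ (ψ / (φ + ψ + 1) - 1) < s → s ≤ 1 →
          |(∫ x, F (rowComp T n 0 ⌊(n:ℝ) * s⌋₊ x) ∂μ) - ∫ x, F x ∂(μhat s)| ≤
            C * (n : ℝ) ^ (-(φ * ψ / (φ + ψ + 1)))) := by
  have hφ0 : 0 ≤ φ := by linarith
  have hK : (1 : ℝ) ≤ n₁ + 3 := by linarith [(n₁.cast_nonneg : (0 : ℝ) ≤ n₁)]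
  have hK2 : (1 : ℝ) ≤ (n₁ + 3) ^ 2 := one_le_pow₀ hK
  refine ⟨?_, C₀ * (n₁ + 3) ^ 2, by positivity, n₁ + 3, by positivity, ?_, ?_, ?_, ?_⟩
  · rw [div_lt_div_iff₀ (by linarith [hψ.1]) three_pos]
    linarith [hψ.2]
  · intro n k l hk hl hkl α β
    exact (hI.abs_covariance_rowComp_le hT hf hfB hn₁ hk hl hkl α β).trans
      (mul_le_mul_of_nonneg_right (le_mul_of_one_le_right hC₀.le hK2) (by positivity))
  · intro s hs k hk α β
    exact (hI.abs_covariance_fhatQ_iterate_le hs ⟨hγ s, hinv s hs⟩ hf hfB hk α β).trans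
      (mul_le_mul_of_nonneg_right (le_mul_of_one_le_right hC₀.le hK2) (by positivity))
  · intro F hF r hr s hs
    refine (abs_integral_muhat_sub_le hI hII hT hγ hinv hf hfB hC₀.le hφ0 hψ.1.le hF hr hs).trans ?_
    gcongr
    exact le_self_pow₀ hK two_ne_zero
  · intro F hF n hn s hs hs1
    exact abs_integral_rowComp_floor_sub_le hI hII hT hγ hinv hf hfB hC₀.le hφ0 ⟨hψ.1.le, hψ.2⟩
      hF hn hs hs1

/-- **Lemma 4.1** (conditions (f1)–(f3) for abstract QDS): conditions (I) and (II) imply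
polynomial decay of correlations (f1), Hölder dependence `t ↦ μ̂_t(F)` with exponent
`θ₂ = φψ/(1+φ)` (f2), and convergence `μ_{n,⌊ns⌋}(F) → μ̂_s(F)` at rate `n^{−θ₃}`,
`θ₃ = φψ/(φ+ψ+1)`, for `s > c₀ n^{η₃−1}` where `η₃ = ψ/(φ+ψ+1) < 1/3` (f3). -/
theorem qds_conditions_f1_f2_f3
    {X : Type*} [MeasurableSpace X] [TopologicalSpace (X → X)] {d : ℕ}
    (T : ℕ → ℕ → X → X) (γ : ℝ → X → X) (μ : Measure X) (μhat : ℝ → Measure X)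
    (f : X → Fin d → ℝ)
    (hμP : IsProbabilityMeasure μ) (hμhatP : ∀ t, IsProbabilityMeasure (μhat t))
    (hT : ∀ n k, Measurable (T n k)) (hγ : ∀ t, Measurable (γ t))
    (hinv : ∀ t ∈ Set.Icc (0:ℝ) 1, (μhat t).map (γ t) = μhat t)
    (hf : Measurable f) (B : ℝ) (hfB : ∀ x α, |f x α| ≤ B)
    (hQDS : ∀ t ∈ Set.Icc (0:ℝ) 1,
      Tendsto (fun n : ℕ => T n ⌊(n:ℝ) * t⌋₊) atTop (nhds (γ t)))
    (C₀ φ ψ : ℝ) (n₁ : ℕ) (hC₀ : 0 < C₀) (hφ : 1 < φ) (hn₁ : 1 ≤ n₁)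
    (hψ : ψ ∈ Set.Ioc (0:ℝ) 1)
    (hI : CondI T γ μ μhat f C₀ φ n₁) (hII : CondII T γ μ μhat f C₀ ψ) :
    ψ / (φ + ψ + 1) < 1/3 ∧
    ∃ C > 0, ∃ c₀ > 0,
      (∀ n k l : ℕ, k ≤ n → l ≤ n → (n₁ : ℤ) ≤ |(k : ℤ) - (l : ℤ)| → ∀ α β : Fin d,
        |∫ x, (f (rowComp T n 0 k x) α - ∫ y, f (rowComp T n 0 k y) α ∂μ) *
              (f (rowComp T n 0 l x) β - ∫ y, f (rowComp T n 0 l y) β ∂μ) ∂μ| ≤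
          C * |(k : ℝ) - (l : ℝ)| ^ (-φ)) ∧
      (∀ s ∈ Set.Icc (0:ℝ) 1, ∀ k : ℕ, n₁ ≤ k → ∀ α β : Fin d,
        |∫ x, fhatQ μhat f α s x * fhatQ μhat f β s ((γ s)^[k] x) ∂(μhat s)| ≤
          C * (k : ℝ) ^ (-φ)) ∧
      (∀ F : X → ℝ, IsFform f (Tprime T γ) F →
        ∀ r ∈ Set.Icc (0:ℝ) 1, ∀ s ∈ Set.Icc (0:ℝ) 1,
          |(∫ x, F x ∂(μhat r)) - ∫ x, F x ∂(μhat s)| ≤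
            C * |r - s| ^ (φ * ψ / (1 + φ))) ∧
      (∀ F : X → ℝ, IsFform f (Tprime T γ) F →
        ∀ n : ℕ, 1 ≤ n → ∀ s : ℝ, c₀ * (n : ℝ) ^ (ψ / (φ + ψ + 1) - 1) < s → s ≤ 1 →
          |(∫ x, F (rowComp T n 0 ⌊(n:ℝ) * s⌋₊ x) ∂μ) - ∫ x, F x ∂(μhat s)| ≤
            C * (n : ℝ) ^ (-(φ * ψ / (φ + ψ + 1)))) :=
  qds_conditions_f1_f2_f3_general T γ μ μhat f hμP hμhatP hT hγ hinv hf B hfB C₀ φ ψ n₁ hC₀ hφ hn₁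
    hψ hI hII
end

section
/- For every β* ∈ (0,1/2) there exists a constant b = b(β*) > 0 such that every function h ∈ C*(β*) with m(h) = 1 satisfies h(x) ≥ b for all x ∈ (0,1]. -/
open MeasureTheory Filter Set ProbabilityTheory
open scoped Classical

noncomputable section

/-- The Pomeau–Manneville map `T_α` (extended to `ℝ`; only its values on `[0,1]` matter). -/
def PM (a : ℝ) : ℝ → ℝ := fun x =>
  if x < 1/2 then x * (1 + 2 ^ a * x ^ a) else 2 * x - 1

/-- Time-dependent composition: `pmComp a n = T_{a (n-1)} ∘ ⋯ ∘ T_{a 0}`, `pmComp a 0 = id`. -/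
def pmComp (a : ℕ → ℝ) : ℕ → ℝ → ℝ
  | 0 => id
  | n+1 => PM (a n) ∘ pmComp a n

/-- The cone `C*(β)` of densities. -/
def memCone (β : ℝ) (h : ℝ → ℝ) : Prop :=
  ContinuousOn h (Set.Ioc 0 1) ∧
  IntegrableOn h (Set.Ioc 0 1) ∧
  (∀ x ∈ Set.Ioc (0:ℝ) 1, 0 ≤ h x) ∧
  AntitoneOn h (Set.Ioc 0 1) ∧
  MonotoneOn (fun x => x ^ (β + 1) * h x) (Set.Ioc 0 1) ∧
  ∀ x ∈ Set.Ioc (0:ℝ) 1, h x ≤ 2 ^ β * (2 + β) * x ^ (-β) * ∫ y in Set.Ioc (0:ℝ) 1, h y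

end

/-!
The cone bound `h y ≤ K y^{-β}` with `K = 2^β (2+β)` caps the mass of `h` on `(0, r]` by
`K r^{1-β} / (1-β)`, and `r` is chosen to make this `1/2`. The remaining mass `≥ 1/2` lies on
`(r, 1]`, where `h ≤ h r` since `h` is decreasing; hence `h r ≥ 1/2`. Monotonicity of
`x^{β+1} h x` and of `h` then spread this to `h x ≥ r^{β+1} / 2` on all of `(0, 1]`.
-/

section

variable {h : ℝ → ℝ} {r : ℝ}

theorem setIntegral_Ioc_le_of_antitoneOn (hanti : AntitoneOn h (Ioc 0 1))
    (hint : IntegrableOn h (Ioc 0 1)) (hr : r ∈ Ioc 0 1) (hnn : 0 ≤ h r) :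
    ∫ y in Ioc r 1, h y ≤ h r := by
  have hsub : Ioc r 1 ⊆ Ioc 0 1 := Ioc_subset_Ioc_left hr.1.le
  calc ∫ y in Ioc r 1, h y ≤ ∫ _ in Ioc r 1, h r :=
        setIntegral_mono_on (hint.mono_set hsub) (integrableOn_const measure_Ioc_lt_top.ne)
          measurableSet_Ioc fun y hy => hanti hr (hsub hy) hy.1.le
    _ = (1 - r) * h r := by
        rw [setIntegral_const, Real.volume_real_Ioc_of_le hr.2, smul_eq_mul]
    _ ≤ h r := by nlinarith [hr.1]

theorem setIntegral_Ioc_zero_le_of_le_mul_rpow {β C : ℝ} (hβ : β < 1) (hr : 0 ≤ r)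
    (hint : IntegrableOn h (Ioc 0 r)) (hle : ∀ y ∈ Ioc 0 r, h y ≤ C * y ^ (-β)) :
    ∫ y in Ioc 0 r, h y ≤ C * (r ^ (1 - β) / (1 - β)) := by
  have hrpow : IntegrableOn (fun y : ℝ => C * y ^ (-β)) (Ioc 0 r) :=
    ((intervalIntegral.intervalIntegrable_rpow' (by linarith)).1).const_mul C
  calc ∫ y in Ioc 0 r, h y ≤ ∫ y in Ioc 0 r, C * y ^ (-β) :=
        setIntegral_mono_on hint hrpow measurableSet_Ioc hle
    _ = C * (r ^ (1 - β) / (1 - β)) := by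
        rw [integral_const_mul, ← intervalIntegral.integral_of_le hr,
          integral_rpow (Or.inl (by linarith)), Real.zero_rpow (by linarith), sub_zero,
          neg_add_eq_sub]

theorem rpow_mul_le_of_antitoneOn_of_monotoneOn {β x : ℝ} (hβ : -1 ≤ β)
    (hnn : ∀ y ∈ Ioc (0 : ℝ) 1, 0 ≤ h y) (hanti : AntitoneOn h (Ioc 0 1))
    (hmono : MonotoneOn (fun y => y ^ (β + 1) * h y) (Ioc 0 1))
    (hr : r ∈ Ioc 0 1) (hx : x ∈ Ioc 0 1) :
    r ^ (β + 1) * h r ≤ h x := by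
  rcases le_or_gt x r with hxr | hrx
  · have hr1 : r ^ (β + 1) ≤ 1 := Real.rpow_le_one hr.1.le hr.2 (by linarith)
    nlinarith [hanti hx hr hxr, hnn r hr]
  · have hx1 : x ^ (β + 1) ≤ 1 := Real.rpow_le_one hx.1.le hx.2 (by linarith)
    have := hmono hr hx hrx.le
    dsimp only at this
    nlinarith [hnn x hx]

end

noncomputable def coneRadius (β : ℝ) : ℝ :=
  ((1 - β) / (2 * (2 ^ β * (2 + β)))) ^ (1 / (1 - β))

section

variable {β : ℝ}

theorem two_le_two_rpow_mul_two_add (hβ : 0 ≤ β) : 2 ≤ 2 ^ β * (2 + β) := by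
  nlinarith [Real.one_le_rpow one_le_two hβ]

theorem coneRadius_mem_Ioc (hβ : β ∈ Ioo 0 1) : coneRadius β ∈ Ioc 0 1 := by
  have hK := two_le_two_rpow_mul_two_add hβ.1.le
  have hc : 0 < (1 - β) / (2 * (2 ^ β * (2 + β))) :=
    div_pos (by linarith [hβ.2]) (by positivity)
  refine ⟨Real.rpow_pos_of_pos hc _, Real.rpow_le_one hc.le ?_ (by simp [hβ.2.le])⟩
  rw [div_le_one (by positivity)]
  linarith [hβ.1]

theorem mul_coneRadius_rpow_div_eq_half (hβ : β ∈ Ioo 0 1) :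
    2 ^ β * (2 + β) * (coneRadius β ^ (1 - β) / (1 - β)) = 1 / 2 := by
  have hβ' : 1 - β ≠ 0 := by linarith [hβ.2]
  have h2β : 0 < 2 + β := by linarith [hβ.1]
  rw [coneRadius, ← Real.rpow_mul (div_nonneg (by linarith [hβ.2]) (by positivity)),
    one_div_mul_cancel hβ', Real.rpow_one]
  field_simp

end

namespace memCone

variable {β : ℝ} {h : ℝ → ℝ}

theorem half_le_apply_coneRadius (hβ : β ∈ Ioo 0 1) (hh : memCone β h)
    (hmass : ∫ y in Ioc (0 : ℝ) 1, h y = 1) : 1 / 2 ≤ h (coneRadius β) := by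
  obtain ⟨-, hint, hnn, hanti, -, hbound⟩ := hh
  have hr := coneRadius_mem_Ioc hβ
  set r := coneRadius β
  have hsmall : ∫ y in Ioc 0 r, h y ≤ 1 / 2 := by
    rw [← mul_coneRadius_rpow_div_eq_half hβ]
    refine setIntegral_Ioc_zero_le_of_le_mul_rpow hβ.2 hr.1.le
      (hint.mono_set (Ioc_subset_Ioc_right hr.2)) fun y hy => ?_
    simpa [hmass] using hbound y (Ioc_subset_Ioc_right hr.2 hy)
  have hsplit : (∫ y in Ioc 0 r, h y) + ∫ y in Ioc r 1, h y = 1 := by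
    rw [← setIntegral_union (Ioc_disjoint_Ioc_of_le le_rfl) measurableSet_Ioc
      (hint.mono_set (Ioc_subset_Ioc_right hr.2)) (hint.mono_set (Ioc_subset_Ioc_left hr.1.le)),
      Ioc_union_Ioc_eq_Ioc hr.1.le hr.2, hmass]
  linarith [setIntegral_Ioc_le_of_antitoneOn hanti hint hr (hnn r hr)]

end memCone

/-- Every probability density in the cone `C*(β*)`, `β* ∈ (0,1/2)`, is bounded below by a
positive constant `b = b(β*)` depending only on `β*`. -/
theorem cone_density_lower_bound (βs : ℝ) (hβs : βs ∈ Set.Ioo (0:ℝ) (1/2)) :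
    ∃ b > 0, ∀ h : ℝ → ℝ, memCone βs h → (∫ y in Set.Ioc (0:ℝ) 1, h y) = 1 →
      ∀ x ∈ Set.Ioc (0:ℝ) 1, b ≤ h x := by
  have hβ : βs ∈ Ioo 0 1 := ⟨hβs.1, by linarith [hβs.2]⟩
  have hr := coneRadius_mem_Ioc hβ
  have hrpow := Real.rpow_pos_of_pos hr.1 (βs + 1)
  refine ⟨coneRadius βs ^ (βs + 1) / 2, by positivity, fun h hh hmass x hx => ?_⟩
  have hhalf := hh.half_le_apply_coneRadius hβ hmass
  obtain ⟨-, -, hnn, hanti, hmono, -⟩ := hh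
  calc coneRadius βs ^ (βs + 1) / 2 ≤ coneRadius βs ^ (βs + 1) * h (coneRadius βs) := by
        nlinarith
    _ ≤ h x := rpow_mul_le_of_antitoneOn_of_monotoneOn (by linarith [hβ.1]) hnn hanti hmono hr hx
end
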